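/- arXiv:1812.10608 — 2 statements merged into one kernel-verified Lean document; each statement's English description precedes it below -/
import Mathlib

section
/- The commutator subgroup of G = A *₂ B is isomorphic to the direct product [A,A] × [B,B] × [A,B]^(2). -/
/-!
In `A *₂ B` the commutators `⁅a, b⁆` are central, so `a ↦ ⁅a, b⁆` is a homomorphism into an
abelian group and `[A, A]` commutes with `B`. Hence `(a, b, c) ↦ a * b * c` is a homomorphism
`[A, A] × [B, B] × [A, B]⁽²⁾ → A *₂ B` with image in the commutator subgroup. The projection
`A *₂ B → A × B` has kernel exactly `[A, B]⁽²⁾`, since `A × B → (A *₂ B) / [A, B]⁽²⁾` is well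
defined and inverts it. This gives injectivity, and surjectivity onto the commutator subgroup:
`g` with `proj g = (a, b)` is `a * b * c` with `c` in the kernel, and `a`, `b` are commutators.
-/

open Monoid
open scoped commutatorElement

/-- The normal subgroup of the free product `A ∗ B` generated by commutators
`⁅x, ⁅a, b⁆⁆` with `x ∈ A ∗ B`, `a ∈ A`, `b ∈ B`. -/
def nil2Rel (A B : Type*) [Group A] [Group B] : Subgroup (Coprod A B) :=
  Subgroup.normalClosure
    {z | ∃ (x : Coprod A B) (a : A) (b : B), z = ⁅x, ⁅(Coprod.inl a : Coprod A B), Coprod.inr b⁆⁆}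

instance (A B : Type*) [Group A] [Group B] : (nil2Rel A B).Normal :=
  Subgroup.normalClosure_normal

/-- The second nilpotent product `A *₂ B = (A ∗ B)/[A ∗ B, [A,B]]`. -/
def Nil2 (A B : Type*) [Group A] [Group B] : Type _ :=
  Coprod A B ⧸ nil2Rel A B

instance (A B : Type*) [Group A] [Group B] : Group (Nil2 A B) :=
  QuotientGroup.Quotient.group _

/-- Canonical map `A → A *₂ B`. -/
def Nil2.inl {A B : Type*} [Group A] [Group B] : A →* Nil2 A B :=
  (QuotientGroup.mk' (nil2Rel A B)).comp Coprod.inl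

/-- Canonical map `B → A *₂ B`. -/
def Nil2.inr {A B : Type*} [Group A] [Group B] : B →* Nil2 A B :=
  (QuotientGroup.mk' (nil2Rel A B)).comp Coprod.inr

/-- The subgroup `[A,B]⁽²⁾` of `A *₂ B` generated by the commutators `⁅a, b⁆`. -/
def commSubgroup (A B : Type*) [Group A] [Group B] : Subgroup (Nil2 A B) :=
  Subgroup.closure {z | ∃ (a : A) (b : B), z = ⁅(Nil2.inl a : Nil2 A B), Nil2.inr b⁆}

section CentralCommutator

variable {G : Type*} [Group G]

theorem commutatorElement_mul_left_of_forall_commute {x y z : G}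
    (h : ∀ g : G, Commute g ⁅y, z⁆) : ⁅x * y, z⁆ = ⁅x, z⁆ * ⁅y, z⁆ := by
  rw [commutatorElement_mul_left_eq_conj_mul, (h x).eq, mul_inv_cancel_right, (h _).eq]

theorem MonoidHom.commute_of_mem_commutator {A : Type*} [Group A] (f : A →* G) (z : G)
    (hz : ∀ (a : A) (g : G), Commute g ⁅f a, z⁆) {a : A} (ha : a ∈ commutator A) :
    Commute (f a) z := by
  let F : A →* G :=
    { toFun := fun x => ⁅f x, z⁆
      map_one' := by simp
      map_mul' := fun x y => by
        simp only [map_mul]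
        exact commutatorElement_mul_left_of_forall_commute (hz y) }
  have hker : commutator A ≤ F.ker := by
    rw [commutator_def, Subgroup.commutator_le]
    intro p _ q _
    rw [MonoidHom.mem_ker, map_commutatorElement, commutatorElement_eq_one_iff_commute]
    exact hz q (F p)
  exact commutatorElement_eq_one_iff_commute.mp (hker ha)

theorem MonoidHom.map_commutator_le {H : Type*} [Group H] (f : G →* H) :
    (commutator G).map f ≤ commutator H := by
  rw [map_commutator_eq]
  exact Subgroup.commutator_mono le_top le_top

end CentralCommutator

theorem commutator_prod (A B : Type*) [Group A] [Group B] :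
    commutator (A × B) = (commutator A).prod (commutator B) := by
  rw [commutator_def, ← Subgroup.top_prod_top, Subgroup.commutator_prod_prod]
  rfl

namespace Nil2

variable {A B : Type*} [Group A] [Group B]

def mk : Coprod A B →* Nil2 A B := QuotientGroup.mk' (nil2Rel A B)

theorem mk_surjective : Function.Surjective (mk : Coprod A B →* Nil2 A B) :=
  QuotientGroup.mk'_surjective _

@[simp] theorem mk_inl (a : A) : mk (Coprod.inl a : Coprod A B) = inl a := rfl

@[simp] theorem mk_inr (b : B) : mk (Coprod.inr b : Coprod A B) = inr b := rfl

theorem hom_ext {H : Type*} [Group H] {f g : Nil2 A B →* H}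
    (hl : f.comp inl = g.comp inl) (hr : f.comp inr = g.comp inr) : f = g :=
  QuotientGroup.monoidHom_ext _ (Coprod.hom_ext hl hr)

theorem commute_commutatorElement (x : Nil2 A B) (a : A) (b : B) :
    Commute x ⁅(inl a : Nil2 A B), inr b⁆ := by
  obtain ⟨w, rfl⟩ := mk_surjective x
  have h : mk ⁅w, ⁅(Coprod.inl a : Coprod A B), Coprod.inr b⁆⁆ = 1 :=
    (QuotientGroup.eq_one_iff _).mpr (Subgroup.subset_normalClosure ⟨w, a, b, rfl⟩)
  rw [map_commutatorElement, map_commutatorElement, mk_inl, mk_inr] at h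
  exact commutatorElement_eq_one_iff_commute.mp h

theorem commSubgroup_le_center : commSubgroup A B ≤ Subgroup.center (Nil2 A B) := by
  rw [commSubgroup, Subgroup.closure_le]
  rintro _ ⟨a, b, rfl⟩
  exact Subgroup.mem_center_iff.mpr fun x => commute_commutatorElement x a b

theorem commute_of_mem_commSubgroup (x : Nil2 A B) {c : Nil2 A B}
    (hc : c ∈ commSubgroup A B) : Commute x c :=
  Subgroup.mem_center_iff.mp (commSubgroup_le_center hc) x

instance : (commSubgroup A B).Normal :=
  ⟨fun c hc g => by rwa [(commute_of_mem_commSubgroup g hc).eq, mul_inv_cancel_right]⟩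

theorem commute_inl_inr_of_mem_commutator {a : A} (ha : a ∈ commutator A) (b : B) :
    Commute (inl a : Nil2 A B) (inr b) :=
  inl.commute_of_mem_commutator (inr b) (fun a' x => commute_commutatorElement x a' b) ha

def proj : Nil2 A B →* A × B :=
  QuotientGroup.lift _ Coprod.toProd <| Subgroup.normalClosure_le_normal <| by
    rintro _ ⟨x, a, b, rfl⟩
    simp [MonoidHom.mem_ker, commutatorElement_def, ← Prod.one_eq_mk]

@[simp] theorem proj_inl (a : A) : proj (inl a : Nil2 A B) = (a, 1) := rfl

@[simp] theorem proj_inr (b : B) : proj (inr b : Nil2 A B) = (1, b) := rfl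

theorem ker_proj : (proj : Nil2 A B →* A × B).ker = commSubgroup A B := by
  refine le_antisymm ?_ ?_
  · let σ : A × B →* Nil2 A B ⧸ commSubgroup A B :=
      ((QuotientGroup.mk' _).comp inl).noncommCoprod ((QuotientGroup.mk' _).comp inr)
        fun a b => by
          rw [← commutatorElement_eq_one_iff_commute, MonoidHom.comp_apply, MonoidHom.comp_apply,
            ← map_commutatorElement, QuotientGroup.mk'_apply, QuotientGroup.eq_one_iff]
          exact Subgroup.subset_closure ⟨a, b, rfl⟩
    -- `σ` inverts `proj` modulo `[A,B]⁽²⁾`.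
    have hσ : σ.comp proj = QuotientGroup.mk' _ :=
      hom_ext (by ext a; simp [σ]) (by ext b; simp [σ])
    intro g hg
    rw [← QuotientGroup.eq_one_iff, ← QuotientGroup.mk'_apply, ← hσ, MonoidHom.comp_apply,
      MonoidHom.mem_ker.mp hg, map_one]
  · rw [commSubgroup, Subgroup.closure_le]
    rintro _ ⟨a, b, rfl⟩
    simp [MonoidHom.mem_ker, commutatorElement_def]

theorem commSubgroup_le_commutator : commSubgroup A B ≤ commutator (Nil2 A B) := by
  rw [commSubgroup, Subgroup.closure_le]
  rintro _ ⟨a, b, rfl⟩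
  exact Subgroup.commutator_mem_commutator (Subgroup.mem_top _) (Subgroup.mem_top _)

def prodCommutatorsHom : commutator A × commutator B × commSubgroup A B →* Nil2 A B :=
  (inl.comp (commutator A).subtype).noncommCoprod
    ((inr.comp (commutator B).subtype).noncommCoprod (commSubgroup A B).subtype
      fun _ c => commute_of_mem_commSubgroup _ c.2)
    fun a _ => (commute_inl_inr_of_mem_commutator a.2 _).mul_right
      (commute_of_mem_commSubgroup _ (Subtype.prop _))

theorem prodCommutatorsHom_apply (p : commutator A × commutator B × commSubgroup A B) :
    prodCommutatorsHom p = inl (p.1 : A) * (inr (p.2.1 : B) * (p.2.2 : Nil2 A B)) := rfl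

theorem proj_prodCommutatorsHom (p : commutator A × commutator B × commSubgroup A B) :
    proj (prodCommutatorsHom p) = ((p.1 : A), (p.2.1 : B)) := by
  have hc : proj (p.2.2 : Nil2 A B) = 1 := by rw [← MonoidHom.mem_ker, ker_proj]; exact p.2.2.2
  rw [prodCommutatorsHom_apply, map_mul, map_mul, hc, proj_inl, proj_inr]
  simp

theorem prodCommutatorsHom_injective :
    Function.Injective (prodCommutatorsHom : _ →* Nil2 A B) := by
  rw [injective_iff_map_eq_one]
  rintro ⟨a, b, c⟩ h
  have hab := congrArg proj h
  rw [proj_prodCommutatorsHom, map_one, Prod.mk_eq_one] at hab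
  obtain ⟨rfl, rfl⟩ : a = 1 ∧ b = 1 := ⟨Subtype.ext hab.1, Subtype.ext hab.2⟩
  rw [prodCommutatorsHom_apply] at h
  simp only [OneMemClass.coe_one, map_one, one_mul] at h
  obtain rfl : c = 1 := Subtype.ext h
  rfl

theorem range_prodCommutatorsHom :
    (prodCommutatorsHom : _ →* Nil2 A B).range = commutator (Nil2 A B) := by
  refine le_antisymm ?_ fun g hg => ?_
  · rintro _ ⟨p, rfl⟩
    exact mul_mem (inl.map_commutator_le ⟨_, p.1.2, rfl⟩)
      (mul_mem (inr.map_commutator_le ⟨_, p.2.1.2, rfl⟩) (commSubgroup_le_commutator p.2.2.2))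
  have hg' : proj g ∈ (commutator A).prod (commutator B) :=
    commutator_prod A B ▸ proj.map_commutator_le ⟨g, hg, rfl⟩
  set c := (inl (proj g).1 * inr (proj g).2)⁻¹ * g
  have hc : c ∈ commSubgroup A B := by
    rw [← ker_proj, MonoidHom.mem_ker, map_mul, map_inv, map_mul, proj_inl, proj_inr]
    simp
  exact ⟨(⟨_, hg'.1⟩, ⟨_, hg'.2⟩, ⟨c, hc⟩), by
    rw [prodCommutatorsHom_apply, ← mul_assoc]; exact mul_inv_cancel_left _ _⟩

end Nil2

/-- The commutator subgroup of `G = A *₂ B` is isomorphic to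
`[A,A] × [B,B] × [A,B]⁽²⁾`. -/
theorem stmt11 (A B : Type*) [Group A] [Group B] :
    Nonempty ((commutator (Nil2 A B)) ≃*
      (commutator A × commutator B × commSubgroup A B)) :=
  ⟨((MonoidHom.ofInjective Nil2.prodCommutatorsHom_injective).trans
    (MulEquiv.subgroupCongr Nil2.range_prodCommutatorsHom)).symm⟩
end

section
/- If A and B are nilpotent groups of classes n and m respectively, then A *₂ B is nilpotent of class at most max{2, n, m}. Moreover, for k > 2, the k-th term of the lower central series of G = A *₂ B equals A_k × B_k (the direct product of the k-th lower central series terms of A and B). -/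
open Monoid
open scoped commutatorElement

/-!
Let `H`, `K` be the images of `A`, `B` in `G = A *₂ B`: they generate `G` and `⁅H, K⁆` is central.
By the three subgroups lemma `⁅⁅H, H⁆, K⁆ = 1`, so from `G₂` on the lower central series of `H`
and `K` commute elementwise and are normal in `G`. Hence `G₂ ≤ H₂ K₂ Z(G)`, and one more
commutator kills both the centre and the mixed terms: `G_k = H_k K_k` for `k ≥ 3`. The projection
`G → A × B` makes this product direct, and `H_k ≅ A_k`, `K_k ≅ B_k`.
-/

namespace Subgroup

variable {G : Type*} [Group G]

theorem commutator_le_iff_le_comap_centralizer {N : Subgroup G} [N.Normal] {X Y : Subgroup G} :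
    ⁅X, Y⁆ ≤ N ↔
      Y ≤ (centralizer (X.map (QuotientGroup.mk' N) : Set (G ⧸ N))).comap
        (QuotientGroup.mk' N) := by
  rw [← map_le_iff_le_comap, ← commutator_eq_bot_iff_le_centralizer, commutator_comm,
    ← map_commutator, map_eq_bot_iff, QuotientGroup.ker_mk']

theorem commutator_sup_right_le {N : Subgroup G} [N.Normal] {X Y₁ Y₂ : Subgroup G}
    (h₁ : ⁅X, Y₁⁆ ≤ N) (h₂ : ⁅X, Y₂⁆ ≤ N) : ⁅X, Y₁ ⊔ Y₂⁆ ≤ N := by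
  rw [commutator_le_iff_le_comap_centralizer] at *
  exact sup_le h₁ h₂

theorem commutator_sup_left_le {N : Subgroup G} [N.Normal] {X₁ X₂ Y : Subgroup G}
    (h₁ : ⁅X₁, Y⁆ ≤ N) (h₂ : ⁅X₂, Y⁆ ≤ N) : ⁅X₁ ⊔ X₂, Y⁆ ≤ N := by
  rw [commutator_comm] at *
  exact commutator_sup_right_le h₁ h₂

section CentralCommutator

variable {H K : Subgroup G}

theorem commutator_commutator_self_eq_bot (hc : ⁅H, K⁆ ≤ center G) : ⁅⁅H, H⁆, K⁆ = ⊥ := by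
  have hHK : ⁅⁅H, K⁆, H⁆ = ⊥ :=
    eq_bot_mono (commutator_mono hc le_rfl) (commutator_center_left H)
  have hKH : ⁅⁅K, H⁆, H⁆ = ⊥ := by rwa [commutator_comm K]
  exact commutator_commutator_eq_bot_of_rotate hHK hKH

theorem commutator_lowerCentralSeries_eq_bot (hc : ⁅H, K⁆ ≤ center G) {n : ℕ} (hn : 1 ≤ n) :
    ⁅H.lowerCentralSeries n, K⁆ = ⊥ :=
  eq_bot_mono (commutator_mono (H.lowerCentralSeries_antitone hn) le_rfl)
    (commutator_commutator_self_eq_bot hc)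

theorem lowerCentralSeries_normal_of_sup_eq_top (hHK : H ⊔ K = ⊤) (hc : ⁅H, K⁆ ≤ center G)
    {n : ℕ} (hn : 1 ≤ n) : (H.lowerCentralSeries n).Normal := by
  rw [← normalizer_eq_top_iff, eq_top_iff, ← hHK, sup_le_iff]
  refine ⟨H.self_le_normalizer_lowerCentralSeries n, le_trans ?_ (centralizer_le_normalizer _)⟩
  rw [← commutator_eq_bot_iff_le_centralizer, commutator_comm]
  exact commutator_lowerCentralSeries_eq_bot hc hn

theorem top_lowerCentralSeries_one_le (hHK : H ⊔ K = ⊤) (hc : ⁅H, K⁆ ≤ center G) :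
    (⊤ : Subgroup G).lowerCentralSeries 1 ≤
      (H.lowerCentralSeries 1 ⊔ K.lowerCentralSeries 1) ⊔ center G := by
  have := lowerCentralSeries_normal_of_sup_eq_top hHK hc le_rfl
  have := lowerCentralSeries_normal_of_sup_eq_top (sup_comm K H ▸ hHK)
    ((commutator_comm K H).trans_le hc) le_rfl
  change ⁅⊤, ⊤⁆ ≤ _
  rw [← hHK]
  refine commutator_sup_left_le (commutator_sup_right_le ?_ ?_)
    (commutator_sup_right_le ?_ ?_)
  · exact le_sup_left.trans le_sup_left
  · exact hc.trans le_sup_right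
  · exact ((commutator_comm K H).trans_le hc).trans le_sup_right
  · exact le_sup_right.trans le_sup_left

theorem commutator_sup_center_top_le (hHK : H ⊔ K = ⊤) (hc : ⁅H, K⁆ ≤ center G) {n : ℕ}
    (hn : 1 ≤ n) :
    ⁅(H.lowerCentralSeries n ⊔ K.lowerCentralSeries n) ⊔ center G, ⊤⁆ ≤
      H.lowerCentralSeries (n + 1) ⊔ K.lowerCentralSeries (n + 1) := by
  have hc' : ⁅K, H⁆ ≤ center G := (commutator_comm K H).trans_le hc
  have := lowerCentralSeries_normal_of_sup_eq_top hHK hc (Nat.le_succ_of_le hn)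
  have := lowerCentralSeries_normal_of_sup_eq_top (sup_comm K H ▸ hHK) hc' (Nat.le_succ_of_le hn)
  rw [← hHK]
  refine commutator_sup_left_le (commutator_sup_left_le ?_ ?_) ?_
  · exact commutator_sup_right_le le_sup_left
      ((commutator_lowerCentralSeries_eq_bot hc hn).trans_le bot_le)
  · exact commutator_sup_right_le ((commutator_lowerCentralSeries_eq_bot hc' hn).trans_le bot_le)
      le_sup_right
  · exact (commutator_center_left _).trans_le bot_le

theorem top_lowerCentralSeries_le_sup_center (hHK : H ⊔ K = ⊤) (hc : ⁅H, K⁆ ≤ center G)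
    {n : ℕ} (hn : 1 ≤ n) :
    (⊤ : Subgroup G).lowerCentralSeries n ≤
      (H.lowerCentralSeries n ⊔ K.lowerCentralSeries n) ⊔ center G := by
  induction n, hn using Nat.le_induction with
  | base => exact top_lowerCentralSeries_one_le hHK hc
  | succ n hn ih =>
    exact (commutator_mono ih le_rfl).trans
      ((commutator_sup_center_top_le hHK hc hn).trans le_sup_left)

theorem top_lowerCentralSeries_eq_sup (hHK : H ⊔ K = ⊤) (hc : ⁅H, K⁆ ≤ center G) {n : ℕ}
    (hn : 2 ≤ n) :
    (⊤ : Subgroup G).lowerCentralSeries n = H.lowerCentralSeries n ⊔ K.lowerCentralSeries n := by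
  obtain ⟨m, rfl⟩ : ∃ m, n = m + 1 := ⟨n - 1, by omega⟩
  refine le_antisymm ?_
    (sup_le (lowerCentralSeries_mono _ le_top) (lowerCentralSeries_mono _ le_top))
  exact (commutator_mono (top_lowerCentralSeries_le_sup_center hHK hc (by omega)) le_rfl).trans
    (commutator_sup_center_top_le hHK hc (by omega))

end CentralCommutator

end Subgroup

namespace Nil2

open Subgroup

variable {A B : Type*} [Group A] [Group B]

theorem commutator_inl_inr_mem_center (a : A) (b : B) :
    ⁅(inl a : Nil2 A B), inr b⁆ ∈ center (Nil2 A B) := by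
  rw [mem_center_iff]
  intro x
  obtain ⟨z, rfl⟩ := QuotientGroup.mk'_surjective (nil2Rel A B) x
  refine commutatorElement_eq_one_iff_mul_comm.mp ?_
  change QuotientGroup.mk' (nil2Rel A B) ⁅z, ⁅(Coprod.inl a : Coprod A B), Coprod.inr b⁆⁆ = 1
  rw [QuotientGroup.mk'_apply, QuotientGroup.eq_one_iff]
  exact subset_normalClosure ⟨z, a, b, rfl⟩

theorem commutator_range_inl_range_inr_le_center :
    ⁅(inl : A →* Nil2 A B).range, (inr : B →* Nil2 A B).range⁆ ≤ center (Nil2 A B) := by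
  rw [commutator_le]
  rintro _ ⟨a, rfl⟩ _ ⟨b, rfl⟩
  exact commutator_inl_inr_mem_center a b

theorem range_inl_sup_range_inr :
    (inl : A →* Nil2 A B).range ⊔ (inr : B →* Nil2 A B).range = ⊤ := by
  change ((QuotientGroup.mk' (nil2Rel A B)).comp Coprod.inl).range ⊔
    ((QuotientGroup.mk' (nil2Rel A B)).comp Coprod.inr).range = ⊤
  rw [MonoidHom.range_comp, MonoidHom.range_comp, ← Subgroup.map_sup,
    Coprod.range_inl_sup_range_inr, ← MonoidHom.range_eq_map, MonoidHom.range_eq_top]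
  exact QuotientGroup.mk'_surjective _

theorem top_lowerCentralSeries_eq {n : ℕ} (hn : 2 ≤ n) :
    (⊤ : Subgroup (Nil2 A B)).lowerCentralSeries n =
      ((⊤ : Subgroup A).lowerCentralSeries n).map inl ⊔
        ((⊤ : Subgroup B).lowerCentralSeries n).map inr := by
  rw [top_lowerCentralSeries_eq_sup range_inl_sup_range_inr
    commutator_range_inl_range_inr_le_center hn, map_lowerCentralSeries, map_lowerCentralSeries,
    ← MonoidHom.range_eq_map, ← MonoidHom.range_eq_map]

def toProd : Nil2 A B →* A × B :=
  QuotientGroup.lift (nil2Rel A B) Coprod.toProd <| normalClosure_le_normal <| by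
    rintro _ ⟨x, a, b, rfl⟩
    simp [commutatorElement_def, Prod.mk_one_one]

theorem toProd_inl (a : A) : toProd (inl a : Nil2 A B) = (a, 1) := rfl

theorem toProd_inr (b : B) : toProd (inr b : Nil2 A B) = (1, b) := rfl

theorem nonempty_top_lowerCentralSeries_mulEquiv {n : ℕ} (hn : 2 ≤ n) :
    Nonempty ((⊤ : Subgroup (Nil2 A B)).lowerCentralSeries n ≃*
      (⊤ : Subgroup A).lowerCentralSeries n × (⊤ : Subgroup B).lowerCentralSeries n) := by
  set f := (inl : A →* Nil2 A B).comp ((⊤ : Subgroup A).lowerCentralSeries n).subtype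
  set g := (inr : B →* Nil2 A B).comp ((⊤ : Subgroup B).lowerCentralSeries n).subtype
  have comm (a b) : Commute (f a) (g b) := by
    have h := commutator_lowerCentralSeries_eq_bot
      (commutator_range_inl_range_inr_le_center (A := A) (B := B)) (show 1 ≤ n by omega)
    rw [← commutatorElement_eq_one_iff_commute, ← Subgroup.mem_bot, ← h]
    refine commutator_mem_commutator ?_ ⟨_, rfl⟩
    rw [MonoidHom.range_eq_map, ← map_lowerCentralSeries]
    exact mem_map_of_mem _ a.2
  have hrange :
      (f.noncommCoprod g comm).range = (⊤ : Subgroup (Nil2 A B)).lowerCentralSeries n := by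
    rw [MonoidHom.noncommCoprod_range, MonoidHom.range_comp, MonoidHom.range_comp, range_subtype,
      range_subtype, top_lowerCentralSeries_eq hn]
  have hinj : Function.Injective (f.noncommCoprod g comm) := by
    have h : toProd.comp (f.noncommCoprod g comm) =
        .prodMap (Subgroup.subtype _) (Subgroup.subtype _) := by
      ext <;> simp [f, g, toProd_inl, toProd_inr]
    refine Function.Injective.of_comp (f := toProd) ?_
    rw [← MonoidHom.coe_comp, h]
    exact (subtype_injective _).prodMap (subtype_injective _)
  exact ⟨((MonoidHom.ofInjective hinj).trans (MulEquiv.subgroupCongr hrange)).symm⟩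

end Nil2

-- With `G₁ = G`, the `k`-th term of the lower central series is `lowerCentralSeries (k - 1)`.
/-- If `A`, `B` are nilpotent of classes `n`, `m`, then `A *₂ B` is nilpotent of class at
most `max {2, n, m}`; moreover for `k > 2` the `k`-th term of the lower central series of
`A *₂ B` (with the convention `G₁ = G`, so it is `lowerCentralSeries _ (k-1)` in Mathlib's
0-based indexing) is isomorphic to `A_k × B_k`. -/
theorem stmt16 (A B : Type*) [Group A] [Group B]
    [hA : Group.IsNilpotent A] [hB : Group.IsNilpotent B] :
    (∃ h : Group.IsNilpotent (Nil2 A B),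
        Group.nilpotencyClass (Nil2 A B) ≤
          max 2 (max (Group.nilpotencyClass A) (Group.nilpotencyClass B))) ∧
    (∀ k : ℕ, 2 < k →
        Nonempty (((⊤ : Subgroup (Nil2 A B)).lowerCentralSeries (k - 1)) ≃*
          ((⊤ : Subgroup A).lowerCentralSeries (k - 1) × (⊤ : Subgroup B).lowerCentralSeries (k - 1)))) := by
  refine ⟨?_, fun k hk => Nil2.nonempty_top_lowerCentralSeries_mulEquiv (by omega)⟩
  set N := max 2 (max (Group.nilpotencyClass A) (Group.nilpotencyClass B))
  have hbot : (⊤ : Subgroup (Nil2 A B)).lowerCentralSeries N = ⊥ := by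
    have hA' : (⊤ : Subgroup A).lowerCentralSeries N = ⊥ :=
      Subgroup.lowerCentralSeries_eq_bot_iff_nilpotencyClass_le.mpr
        (le_max_of_le_right (le_max_left _ _))
    have hB' : (⊤ : Subgroup B).lowerCentralSeries N = ⊥ :=
      Subgroup.lowerCentralSeries_eq_bot_iff_nilpotencyClass_le.mpr
        (le_max_of_le_right (le_max_right _ _))
    rw [Nil2.top_lowerCentralSeries_eq (le_max_left _ _), hA', hB', Subgroup.map_bot,
      Subgroup.map_bot, bot_sup_eq]
  have hnil : Group.IsNilpotent (Nil2 A B) :=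
    Subgroup.nilpotent_iff_lowerCentralSeries.mpr ⟨N, hbot⟩
  exact ⟨hnil, Subgroup.lowerCentralSeries_eq_bot_iff_nilpotencyClass_le.mp hbot⟩
end
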